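/- Let A be a serial finite length abelian category, let S be a class of indecomposable objects of A, and let M be an indecomposable object of A. If there exists an epimorphism X₁ ⊞ ⋯ ⊞ X_m → M for some finite list of objects X₁, …, X_m of S, then there exists an epimorphism X → M for a single object X of S. (In other words, the indecomposable objects of Gen(add S) coincide with the indecomposable objects of Gen S.) -/

import Mathlib

open CategoryTheory CategoryTheory.Limits

universe v u

attribute [local instance] CategoryTheory.Abelian.hasFiniteBiproducts

variable {A : Type u} [Category.{v} A] [Abelian A]

/-- An object is uniserial if its subobjects are totally ordered by inclusion. -/
def Uniserial (U : A) : Prop :=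
  ∀ P Q : Subobject U, P ≤ Q ∨ Q ≤ P

/-- A category is serial if every object is isomorphic to a finite biproduct of
uniserial objects. -/
def IsSerial (A : Type u) [Category.{v} A] [Abelian A] : Prop :=
  ∀ X : A, ∃ (m : ℕ) (Y : Fin m → A),
    (∀ i, Uniserial (Y i)) ∧ Nonempty (X ≅ ⨁ Y)

/-- An object is indecomposable if it is nonzero and in any decomposition as a
biproduct one of the summands is zero. -/
def Indec (X : A) : Prop :=
  ¬ IsZero X ∧ ∀ B C : A, Nonempty (X ≅ B ⊞ C) → IsZero B ∨ IsZero C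


/-! An indecomposable object of a serial category is a summand of a finite biproduct of uniserial
objects, hence uniserial itself. Given an epimorphism `X₁ ⊞ ⋯ ⊞ Xₘ ⟶ M` with `M` uniserial, the
images of its components are totally ordered subobjects of `M`; the epimorphism factors through
the largest of them, which is therefore all of `M`, so that one component is already epi. -/

noncomputable def biproductFinSuccIso {n : ℕ} (Y : Fin (n + 1) → A) :
    (⨁ Y) ≅ Y 0 ⊞ ⨁ (fun i : Fin n => Y i.succ) where
  hom := biprod.lift (biproduct.π Y 0) (biproduct.lift fun i => biproduct.π Y i.succ)
  inv := biprod.desc (biproduct.ι Y 0) (biproduct.desc fun i => biproduct.ι Y i.succ)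
  hom_inv_id := by
    rw [biprod.lift_desc, biproduct.lift_desc, ← biproduct.total, Fin.sum_univ_succ]
  inv_hom_id := by
    apply biprod.hom_ext'
    · apply biprod.hom_ext
      · simp
      · ext k
        simp [biproduct.ι_π_ne _ (Fin.succ_ne_zero k).symm]
    · apply biprod.hom_ext
      · ext j
        simp [biproduct.ι_π_ne _ (Fin.succ_ne_zero j)]
      · ext j k
        by_cases h : k = j
        · subst h; simp
        · simp [biproduct.ι_π_ne _ ((Fin.succ_injective n).ne h), biproduct.ι_π_ne _ h]

omit [Abelian A] in
theorem isZero_biproduct_of_isEmpty [HasZeroMorphisms A] {ι : Type*} [IsEmpty ι] (X : ι → A)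
    [HasBiproduct X] : IsZero (⨁ X) :=
  (IsZero.iff_id_eq_zero _).mpr (biproduct.hom_ext _ _ isEmptyElim)

theorem Indec.exists_iso_of_iso_biproduct {X : A} (hX : Indec X) :
    ∀ {n : ℕ} (Y : Fin n → A), (X ≅ ⨁ Y) → ∃ i, Nonempty (X ≅ Y i)
  | 0, Y, e => absurd (IsZero.of_iso (isZero_biproduct_of_isEmpty Y) e) hX.1
  | n + 1, Y, e => by
    let e' := e ≪≫ biproductFinSuccIso Y
    rcases hX.2 _ _ ⟨e'⟩ with hY0 | hrest
    · obtain ⟨i, ⟨f⟩⟩ := hX.exists_iso_of_iso_biproduct _ (e' ≪≫ (isoZeroBiprod hY0).symm)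
      exact ⟨i.succ, ⟨f⟩⟩
    · exact ⟨0, ⟨e' ≪≫ (isoBiprodZero hrest).symm⟩⟩

omit [Abelian A] in
theorem Uniserial.of_iso {X U : A} (e : X ≅ U) (hU : Uniserial U) : Uniserial X := fun P Q =>
  (hU (Subobject.mapIsoToOrderIso e P) (Subobject.mapIsoToOrderIso e Q)).imp
    (Subobject.mapIsoToOrderIso e).le_iff_le.mp (Subobject.mapIsoToOrderIso e).le_iff_le.mp

theorem Indec.uniserial (hser : IsSerial A) {M : A} (hM : Indec M) : Uniserial M := by
  obtain ⟨n, Y, hY, ⟨e⟩⟩ := hser M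
  obtain ⟨i, ⟨f⟩⟩ := hM.exists_iso_of_iso_biproduct Y e
  exact (hY i).of_iso f

theorem exists_forall_le_of_total {ι α : Type*} [Finite ι] [Nonempty ι] [Preorder α]
    (f : ι → α) (hf : ∀ i j, f i ≤ f j ∨ f j ≤ f i) : ∃ i, ∀ j, f j ≤ f i := by
  obtain ⟨i, -, hi⟩ := Set.finite_univ.exists_maximalFor f Set.univ Set.univ_nonempty
  exact ⟨i, fun j => (hf j i).elim id (hi (Set.mem_univ j))⟩

theorem epi_of_epi_biproduct_desc_of_imageSubobject_le {ι : Type*} [Finite ι] {X : ι → A} {M : A}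
    (f : ∀ j, X j ⟶ M) [Epi (biproduct.desc f)] (i : ι)
    (hi : ∀ j, imageSubobject (f j) ≤ imageSubobject (f i)) : Epi (f i) := by
  obtain ⟨p, hp⟩ : ∃ p, p ≫ (imageSubobject (f i)).arrow = biproduct.desc f :=
    ⟨biproduct.desc fun j => factorThruImageSubobject (f j) ≫ Subobject.ofLE _ _ (hi j), by
      ext
      simp⟩
  have : Epi (p ≫ (imageSubobject (f i)).arrow) := hp ▸ inferInstance
  have : Epi (imageSubobject (f i)).arrow := epi_of_epi p _
  have : IsIso (imageSubobject (f i)).arrow := isIso_of_mono_of_epi _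
  rw [← imageSubobject_arrow_comp (f i)]
  exact epi_comp _ _

theorem Uniserial.exists_epi_of_epi_biproduct_desc {ι : Type*} [Finite ι] {X : ι → A} {M : A}
    (hM : Uniserial M) (hM0 : ¬ IsZero M) (f : ∀ j, X j ⟶ M) [Epi (biproduct.desc f)] :
    ∃ i, Epi (f i) := by
  cases isEmpty_or_nonempty ι
  · exact (hM0 ((isZero_biproduct_of_isEmpty X).of_epi (biproduct.desc f))).elim
  obtain ⟨i, hi⟩ := exists_forall_le_of_total (fun j => imageSubobject (f j)) fun j k => hM _ _
  exact ⟨i, epi_of_epi_biproduct_desc_of_imageSubobject_le f i hi⟩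

theorem indec_gen_add_eq_gen
    -- `A` is a serial finite length abelian category
    [∀ X : A, IsArtinianObject X] [∀ X : A, IsNoetherianObject X]
    (hser : IsSerial A)
    (S : Set A) (hS : ∀ X ∈ S, Indec X) (M : A) (hM : Indec M)
    (h : ∃ (m : ℕ) (Xs : Fin m → A), (∀ i, Xs i ∈ S) ∧
      ∃ g : ⨁ Xs ⟶ M, Epi g) :
    ∃ X ∈ S, ∃ g : X ⟶ M, Epi g := by
  obtain ⟨m, Xs, hXs, g, hg⟩ := h
  have : Epi (biproduct.desc fun i => biproduct.ι Xs i ≫ g) := by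
    rwa [show biproduct.desc (fun i => biproduct.ι Xs i ≫ g) = g by ext; simp]
  obtain ⟨i, hi⟩ := (hM.uniserial hser).exists_epi_of_epi_biproduct_desc hM.1
    fun i => biproduct.ι Xs i ≫ g
  exact ⟨Xs i, hXs i, _, hi⟩
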